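/- arXiv:2503.17638 — 5 statements merged into one kernel-verified Lean document; each statement's English description precedes it below -/
import Mathlib

section
/- Let c_o, c_u > 0 and C(x) = c_o·max(x, 0) + c_u·max(−x, 0). Fix t ≥ 1 and real numbers d_j, Q¹_j, Q²_j for j = 1, …, t, and set δ = (1/t)·Σ_{j=1}^{t} |Q¹_j − Q²_j|. Let L ≤ 0 and U ≥ 1, and let ω_1, ω_2 ∈ [L, U] with ω_1 + ω_2 = 1. Then (1/t)·Σ_{j=1}^{t} C(Q¹_j − d_j) − (1/t)·Σ_{j=1}^{t} C(ω_1·Q¹_j + ω_2·Q²_j − d_j) ≤ max(c_o, c_u) · max(|L|, U) · δ, and the same bound holds with Q² in place of Q¹ on the left-hand side. -/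
lemma nv_lip (c_o c_u : ℝ) (hco : 0 < c_o) (hcu : 0 < c_u)
    (C : ℝ → ℝ) (hC : ∀ x : ℝ, C x = c_o * max x 0 + c_u * max (-x) 0)
    (x y : ℝ) : C x - C y ≤ max c_o c_u * |x - y| := by
  rw [hC, hC]
  have h1 : max x 0 - max y 0 ≤ |x - y| :=
    le_trans (le_abs_self _) (abs_max_sub_max_le_abs x y 0)
  have h2 : max (-x) 0 - max (-y) 0 ≤ |x - y| := by
    have h := le_trans (le_abs_self _) (abs_max_sub_max_le_abs (-x) (-y) 0)
    have h3 : |(-x) - (-y)| = |x - y| := by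
      rw [show (-x) - (-y) = -(x - y) by ring, abs_neg]
    rwa [h3] at h
  have hco' : c_o ≤ max c_o c_u := le_max_left _ _
  have hcu' : c_u ≤ max c_o c_u := le_max_right _ _
  have hMnn : 0 ≤ max c_o c_u := le_trans hco.le (le_max_left _ _)
  rcases le_total x y with hxy | hxy
  · have ha : max x 0 ≤ max y 0 := max_le_max hxy le_rfl
    have hb : max (-y) 0 ≤ max (-x) 0 := max_le_max (by linarith) le_rfl
    nlinarith [mul_le_mul_of_nonneg_right hcu' (sub_nonneg.2 hb),
      mul_le_mul_of_nonneg_left h2 hMnn,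
      mul_nonneg hco.le (sub_nonneg.2 ha)]
  · have ha : max y 0 ≤ max x 0 := max_le_max hxy le_rfl
    have hb : max (-x) 0 ≤ max (-y) 0 := max_le_max (by linarith) le_rfl
    nlinarith [mul_le_mul_of_nonneg_right hco' (sub_nonneg.2 ha),
      mul_le_mul_of_nonneg_left h1 hMnn,
      mul_nonneg hcu.le (sub_nonneg.2 hb)]

/-- Proposition 5: The improvement of the PAA combined policy
`ω₁Q¹ + ω₂Q²` over either candidate policy (in empirical average cost) is bounded by
`max(c_o,c_u)·max(|L|,U)·δ`, where `δ` is the empirical ℓ₁ distance between the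
candidate policies. -/
theorem paa_improvement_bounded_by_distance (c_o c_u : ℝ) (hco : 0 < c_o) (hcu : 0 < c_u)
    (C : ℝ → ℝ) (hC : ∀ x : ℝ, C x = c_o * max x 0 + c_u * max (-x) 0)
    (t : ℕ) (ht : 1 ≤ t) (d Q1 Q2 : Fin t → ℝ)
    (δ : ℝ) (hδ : δ = (1 / (t : ℝ)) * ∑ j : Fin t, |Q1 j - Q2 j|)
    (L U : ℝ) (hL : L ≤ 0) (hU : 1 ≤ U)
    (ω1 ω2 : ℝ) (hω1 : L ≤ ω1 ∧ ω1 ≤ U) (hω2 : L ≤ ω2 ∧ ω2 ≤ U)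
    (hsum : ω1 + ω2 = 1) :
    ((1 / (t : ℝ)) * ∑ j : Fin t, C (Q1 j - d j)) -
        (1 / (t : ℝ)) * ∑ j : Fin t, C (ω1 * Q1 j + ω2 * Q2 j - d j) ≤
      max c_o c_u * max |L| U * δ ∧
    ((1 / (t : ℝ)) * ∑ j : Fin t, C (Q2 j - d j)) -
        (1 / (t : ℝ)) * ∑ j : Fin t, C (ω1 * Q1 j + ω2 * Q2 j - d j) ≤
      max c_o c_u * max |L| U * δ := by
  set M := max c_o c_u with hM
  set K := max |L| U with hK
  have hMpos : 0 ≤ M := le_trans hco.le (le_max_left _ _)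
  have hKpos : 0 ≤ K := le_trans (abs_nonneg L) (le_max_left _ _)
  have htpos : (0:ℝ) < t := by exact_mod_cast ht
  have hinv : (0:ℝ) ≤ 1 / t := by positivity
  have habs : ∀ ω, L ≤ ω → ω ≤ U → |ω| ≤ K := by
    intro ω h1 h2
    rcases abs_cases ω with ⟨he, _⟩ | ⟨he, _⟩
    · rw [he]; exact le_trans h2 (le_max_right _ _)
    · rw [he]
      calc -ω ≤ -L := by linarith
        _ = |L| := (abs_of_nonpos hL).symm
        _ ≤ K := le_max_left _ _
  have key : ∀ (P : Fin t → ℝ) (ω : ℝ), |ω| ≤ K →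
      (∀ j, P j - (ω1 * Q1 j + ω2 * Q2 j) = ω * (Q1 j - Q2 j)) →
      ((1 / (t : ℝ)) * ∑ j : Fin t, C (P j - d j)) -
        (1 / (t : ℝ)) * ∑ j : Fin t, C (ω1 * Q1 j + ω2 * Q2 j - d j) ≤ M * K * δ := by
    intro P ω hω hdiff
    have hsum_le : ∑ j : Fin t, C (P j - d j) - ∑ j : Fin t, C (ω1 * Q1 j + ω2 * Q2 j - d j)
        ≤ ∑ j : Fin t, M * K * |Q1 j - Q2 j| := by
      rw [← Finset.sum_sub_distrib]
      apply Finset.sum_le_sum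
      intro j _
      have := nv_lip c_o c_u hco hcu C hC (P j - d j) (ω1 * Q1 j + ω2 * Q2 j - d j)
      have heq : (P j - d j) - (ω1 * Q1 j + ω2 * Q2 j - d j) = ω * (Q1 j - Q2 j) := by
        have := hdiff j; linarith
      rw [heq, abs_mul] at this
      calc C (P j - d j) - C (ω1 * Q1 j + ω2 * Q2 j - d j) ≤ M * (|ω| * |Q1 j - Q2 j|) := this
        _ ≤ M * (K * |Q1 j - Q2 j|) := by
            apply mul_le_mul_of_nonneg_left _ hMpos
            exact mul_le_mul_of_nonneg_right hω (abs_nonneg _)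
        _ = M * K * |Q1 j - Q2 j| := by ring
    rw [hδ]
    rw [← Finset.mul_sum] at hsum_le
    calc ((1 / (t : ℝ)) * ∑ j : Fin t, C (P j - d j)) -
          (1 / (t : ℝ)) * ∑ j : Fin t, C (ω1 * Q1 j + ω2 * Q2 j - d j)
        = (1 / (t : ℝ)) * (∑ j : Fin t, C (P j - d j) - ∑ j : Fin t, C (ω1 * Q1 j + ω2 * Q2 j - d j)) := by ring
      _ ≤ (1 / (t : ℝ)) * (M * K * ∑ j : Fin t, |Q1 j - Q2 j|) := by
          exact mul_le_mul_of_nonneg_left hsum_le hinv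
      _ = M * K * ((1 / (t : ℝ)) * ∑ j : Fin t, |Q1 j - Q2 j|) := by ring
  constructor
  · exact key Q1 ω2 (habs ω2 hω2.1 hω2.2) (fun j => by rw [show ω2 = 1 - ω1 by linarith]; ring)
  · exact key Q2 (-ω1) (by rw [abs_neg]; exact habs ω1 hω1.1 hω1.2) (fun j => by rw [show ω1 = 1 - ω2 by linarith]; ring)
end

section
/- Let c_o, c_u > 0 and C(x) = c_o·max(x, 0) + c_u·max(−x, 0). Fix t ≥ 1, real numbers x_j and d_j for j = 1, …, t, and functions Q¹, Q² : ℝ → ℝ. Set δ = (1/t)·Σ_{j=1}^{t} |Q¹(x_j) − Q²(x_j)|. Let L ≤ 0 and U ≥ 1, and let ω_1, ω_2 ∈ [L, U] with ω_1 + ω_2 = 1. Then (1/t)·Σ_{j=1}^{t} C(Q¹(x_j) − d_j) − (1/t)·Σ_{j=1}^{t} C(ω_1·Q¹(x_j) + ω_2·Q²(x_j) − d_j) ≤ max(c_o, c_u) · max(|L|, U) · δ, and the same bound holds with Q² in place of Q¹ on the left-hand side. -/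
private lemma lip_aux (c_o c_u : ℝ) (hco : 0 < c_o) (hcu : 0 < c_u) (a b : ℝ) :
    (c_o * max a 0 + c_u * max (-a) 0) - (c_o * max b 0 + c_u * max (-b) 0) ≤
      max c_o c_u * |a - b| := by
  have h1 : max a 0 - max b 0 ≤ |a - b| := by
    cases' abs_cases (a - b) with h h <;>
      rcases le_total a 0 with ha | ha <;> rcases le_total b 0 with hb | hb <;>
      simp [max_eq_left, max_eq_right, ha, hb] <;> linarith
  have h2 : max (-a) 0 - max (-b) 0 ≤ |a - b| := by
    cases' abs_cases (a - b) with h h <;>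
      rcases le_total a 0 with ha | ha <;> rcases le_total b 0 with hb | hb <;>
      simp [max_eq_left, max_eq_right, neg_nonneg.mpr, neg_nonpos.mpr, ha, hb] <;> linarith
  have ea : max a 0 + max (-a) 0 = |a| := by
    rcases le_total a 0 with h | h <;>
      simp [max_eq_left, max_eq_right, neg_nonneg.mpr, neg_nonpos.mpr, h,
        abs_of_nonpos, abs_of_nonneg]
  have eb : max b 0 + max (-b) 0 = |b| := by
    rcases le_total b 0 with h | h <;>
      simp [max_eq_left, max_eq_right, neg_nonneg.mpr, neg_nonpos.mpr, h,
        abs_of_nonpos, abs_of_nonneg]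
  have h12 : (max a 0 - max b 0) + (max (-a) 0 - max (-b) 0) ≤ |a - b| := by
    have := abs_sub_abs_le_abs_sub a b; linarith
  rcases le_total c_o c_u with h | h
  · rw [max_eq_right h]
    nlinarith [mul_le_mul_of_nonneg_left h12 hco.le,
      mul_le_mul_of_nonneg_left h2 (sub_nonneg.mpr h)]
  · rw [max_eq_left h]
    nlinarith [mul_le_mul_of_nonneg_left h12 hcu.le,
      mul_le_mul_of_nonneg_left h1 (sub_nonneg.mpr h)]

/-- Proposition 8, feature-based case: For candidate policies given by
functions `Q¹, Q² : ℝ → ℝ` of the covariate, the improvement of the PAA combined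
policy over either candidate policy is bounded by `max(c_o,c_u)·max(|L|,U)·δ`. -/
theorem paa_improvement_bounded_by_distance_feature (c_o c_u : ℝ)
    (hco : 0 < c_o) (hcu : 0 < c_u)
    (C : ℝ → ℝ) (hC : ∀ x : ℝ, C x = c_o * max x 0 + c_u * max (-x) 0)
    (t : ℕ) (ht : 1 ≤ t) (x d : Fin t → ℝ) (Q1 Q2 : ℝ → ℝ)
    (δ : ℝ) (hδ : δ = (1 / (t : ℝ)) * ∑ j : Fin t, |Q1 (x j) - Q2 (x j)|)
    (L U : ℝ) (hL : L ≤ 0) (hU : 1 ≤ U)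
    (ω1 ω2 : ℝ) (hω1 : L ≤ ω1 ∧ ω1 ≤ U) (hω2 : L ≤ ω2 ∧ ω2 ≤ U)
    (hsum : ω1 + ω2 = 1) :
    ((1 / (t : ℝ)) * ∑ j : Fin t, C (Q1 (x j) - d j)) -
        (1 / (t : ℝ)) * ∑ j : Fin t, C (ω1 * Q1 (x j) + ω2 * Q2 (x j) - d j) ≤
      max c_o c_u * max |L| U * δ ∧
    ((1 / (t : ℝ)) * ∑ j : Fin t, C (Q2 (x j) - d j)) -
        (1 / (t : ℝ)) * ∑ j : Fin t, C (ω1 * Q1 (x j) + ω2 * Q2 (x j) - d j) ≤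
      max c_o c_u * max |L| U * δ := by
  have hlip : ∀ a b : ℝ, C a - C b ≤ max c_o c_u * |a - b| := by
    intro a b; rw [hC, hC]; exact lip_aux c_o c_u hco hcu a b
  have hM : (0:ℝ) ≤ max c_o c_u := le_trans hco.le (le_max_left _ _)
  have hKω : ∀ ω : ℝ, L ≤ ω → ω ≤ U → |ω| ≤ max |L| U := by
    intro ω h1 h2
    rcases le_total 0 ω with h | h
    · rw [abs_of_nonneg h]; exact le_max_of_le_right h2
    · rw [abs_of_nonpos h]; exact le_max_of_le_left (by rw [abs_of_nonpos hL]; linarith)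
  have hK : (0:ℝ) ≤ max |L| U := le_trans (abs_nonneg _) (le_max_left _ _)
  have ht' : (0:ℝ) ≤ 1 / (t : ℝ) := by positivity
  have key : ∀ (ω Qa Qb : ℝ → ℝ), (∀ y, |ω y| ≤ max |L| U) →
      (∀ j : Fin t, Qa (x j) - d j - (ω1 * Q1 (x j) + ω2 * Q2 (x j) - d j)
          = ω (x j) * (Q1 (x j) - Q2 (x j))) →
      ((1 / (t : ℝ)) * ∑ j : Fin t, C (Qa (x j) - d j)) -
        (1 / (t : ℝ)) * ∑ j : Fin t, C (ω1 * Q1 (x j) + ω2 * Q2 (x j) - d j) ≤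
      max c_o c_u * max |L| U * δ := by
    intro ω Qa Qb hωb heq
    rw [hδ, ← mul_sub, ← Finset.sum_sub_distrib]
    rw [show max c_o c_u * max |L| U * ((1 / (t:ℝ)) * ∑ j : Fin t, |Q1 (x j) - Q2 (x j)|)
        = (1 / (t:ℝ)) * ∑ j : Fin t, max c_o c_u * max |L| U * |Q1 (x j) - Q2 (x j)| by
      rw [show (∑ j : Fin t, max c_o c_u * max |L| U * |Q1 (x j) - Q2 (x j)|)
          = max c_o c_u * max |L| U * ∑ j : Fin t, |Q1 (x j) - Q2 (x j)| from
        (Finset.mul_sum _ _ _).symm]; ring]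
    apply mul_le_mul_of_nonneg_left _ ht'
    apply Finset.sum_le_sum
    intro j _
    calc C (Qa (x j) - d j) - C (ω1 * Q1 (x j) + ω2 * Q2 (x j) - d j)
        ≤ max c_o c_u * |Qa (x j) - d j - (ω1 * Q1 (x j) + ω2 * Q2 (x j) - d j)| :=
          hlip _ _
      _ = max c_o c_u * (|ω (x j)| * |Q1 (x j) - Q2 (x j)|) := by
          rw [heq j, abs_mul]
      _ ≤ max c_o c_u * max |L| U * |Q1 (x j) - Q2 (x j)| := by
          rw [mul_assoc]
          exact mul_le_mul_of_nonneg_left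
            (mul_le_mul_of_nonneg_right (hωb (x j)) (abs_nonneg _)) hM
  constructor
  · exact key (fun _ => ω2) Q1 Q2 (fun _ => hKω ω2 hω2.1 hω2.2)
      (fun j => by linear_combination (-(Q1 (x j))) * hsum)
  · exact key (fun _ => -ω1) Q2 Q1 (fun _ => by
      rw [abs_neg]; exact hKω ω1 hω1.1 hω1.2)
      (fun j => by linear_combination (-(Q2 (x j))) * hsum)
end

section
/- Let m ∈ ℝ and s > 0, and let μ be the Gaussian measure on ℝ with mean m and variance s². Then ∫ max(x, 0) dμ(x) = (s/√(2π))·exp(−m²/(2s²)) + m·Φ(m/s), where Φ denotes the cumulative distribution function of the standard normal distribution N(0,1). -/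
open MeasureTheory ProbabilityTheory

/-- The standard normal cumulative distribution function
`Φ(z) = ∫_{−∞}^{z} (1/√(2π))·e^{−u²/2} du`. -/
noncomputable def stdNormalCDF (z : ℝ) : ℝ :=
  ∫ u in Set.Iic z, (1 / Real.sqrt (2 * Real.pi)) * Real.exp (-u ^ 2 / 2)

open Set Filter Real
open scoped NNReal ENNReal

lemma stdNormalCDF_eq (z : ℝ) :
    stdNormalCDF z = ∫ u in Set.Iic z, gaussianPDFReal 0 1 u := by
  unfold stdNormalCDF
  refine setIntegral_congr_fun measurableSet_Iic (fun u _ => ?_)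
  simp [gaussianPDFReal, one_div]

lemma continuous_gauss01 : Continuous (gaussianPDFReal 0 1) := by
  rw [gaussianPDFReal_def]
  fun_prop

lemma stdNormalCDF_hasDerivAt (z : ℝ) :
    HasDerivAt stdNormalCDF (gaussianPDFReal 0 1 z) z := by
  have hint := integrable_gaussianPDFReal 0 1
  have hfun : stdNormalCDF = fun z =>
      (∫ u in Set.Iic (0:ℝ), gaussianPDFReal 0 1 u) + ∫ u in (0:ℝ)..z, gaussianPDFReal 0 1 u := by
    funext z
    rw [stdNormalCDF_eq, ← intervalIntegral.integral_Iic_sub_Iic hint.integrableOn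
      hint.integrableOn]
    ring
  rw [hfun]
  exact (intervalIntegral.integral_hasDerivAt_right hint.intervalIntegrable
    continuous_gauss01.aestronglyMeasurable.stronglyMeasurableAtFilter
    continuous_gauss01.continuousAt).const_add _

lemma stdNormalCDF_tendsto : Tendsto stdNormalCDF atTop (nhds 1) := by
  have h := (MeasureTheory.aecover_Iic (μ := (volume : Measure ℝ)) (l := atTop)
    tendsto_id).integral_tendsto_of_countably_generated (integrable_gaussianPDFReal 0 1)
  rw [integral_gaussianPDFReal_eq_one 0 one_ne_zero] at h
  have : stdNormalCDF = fun z => ∫ u in Set.Iic z, gaussianPDFReal 0 1 u := funext stdNormalCDF_eq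
  rw [this]
  exact h

lemma stdNormalCDF_neg (a : ℝ) : stdNormalCDF (-a) = 1 - stdNormalCDF a := by
  have hint := integrable_gaussianPDFReal 0 1
  have h1 : stdNormalCDF (-a) = ∫ u in Set.Ioi a, gaussianPDFReal 0 1 u := by
    have := integral_comp_neg_Iic (c := -a) (f := gaussianPDFReal 0 1)
    rw [neg_neg] at this
    rw [stdNormalCDF_eq, ← this]
    refine setIntegral_congr_fun measurableSet_Iic (fun u _ => ?_)
    simp [gaussianPDFReal]
  have h2 := intervalIntegral.integral_Iic_add_Ioi (b := a) hint.integrableOn hint.integrableOn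
  rw [integral_gaussianPDFReal_eq_one 0 one_ne_zero] at h2
  rw [h1, stdNormalCDF_eq]
  linarith

lemma gauss_hasDerivAt (m s : ℝ) (hs : 0 < s) (x : ℝ) :
    HasDerivAt (gaussianPDFReal m (Real.toNNReal (s ^ 2)))
      (-((x - m) / s ^ 2) * gaussianPDFReal m (Real.toNNReal (s ^ 2)) x) x := by
  have hv : ((Real.toNNReal (s ^ 2) : ℝ≥0) : ℝ) = s ^ 2 := Real.coe_toNNReal _ (sq_nonneg s)
  have h1 : HasDerivAt (fun y : ℝ => -(y - m) ^ 2 / (2 * s ^ 2)) (-((x - m) / s ^ 2)) x := by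
    have h0 : HasDerivAt (fun y : ℝ => y - m) 1 x := (hasDerivAt_id x).sub_const m
    have h2 := ((h0.pow 2).neg).div_const (2 * s ^ 2)
    refine h2.congr_deriv ?_
    have : s ^ 2 ≠ 0 := by positivity
    field_simp
    ring
  have h4 := h1.exp.const_mul ((Real.sqrt (2 * π * s ^ 2))⁻¹)
  have hfe : gaussianPDFReal m (Real.toNNReal (s ^ 2)) =
      fun y => (Real.sqrt (2 * π * s ^ 2))⁻¹ * Real.exp (-(y - m) ^ 2 / (2 * s ^ 2)) := by
    rw [gaussianPDFReal_def, hv]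
  rw [hfe]
  refine h4.congr_deriv ?_
  ring

lemma gauss_eq_std (m s : ℝ) (hs : 0 < s) (x : ℝ) :
    gaussianPDFReal m (Real.toNNReal (s ^ 2)) x = s⁻¹ * gaussianPDFReal 0 1 ((x - m) / s) := by
  have hv : ((Real.toNNReal (s ^ 2) : ℝ≥0) : ℝ) = s ^ 2 := Real.coe_toNNReal _ (sq_nonneg s)
  have h2π : (0:ℝ) ≤ 2 * π := by positivity
  have hsqrt : Real.sqrt (2 * π * s ^ 2) = Real.sqrt (2 * π) * s := by
    rw [Real.sqrt_mul h2π, Real.sqrt_sq hs.le]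
  have hss : Real.sqrt (2 * π) > 0 := Real.sqrt_pos.mpr (by positivity)
  simp only [gaussianPDFReal, hv, hsqrt, NNReal.coe_one, sub_zero, mul_one]
  rw [mul_inv]
  have h3 : -((x - m) / s) ^ 2 / 2 = -(x - m) ^ 2 / (2 * s ^ 2) := by
    rw [div_pow]; ring
  rw [h3]
  ring

lemma gauss_tendsto_zero (m s : ℝ) (hs : 0 < s) :
    Tendsto (gaussianPDFReal m (Real.toNNReal (s ^ 2))) atTop (nhds 0) := by
  have hv : ((Real.toNNReal (s ^ 2) : ℝ≥0) : ℝ) = s ^ 2 := Real.coe_toNNReal _ (sq_nonneg s)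
  have hfe : gaussianPDFReal m (Real.toNNReal (s ^ 2)) =
      fun y => (Real.sqrt (2 * π * s ^ 2))⁻¹ * Real.exp (-(y - m) ^ 2 / (2 * s ^ 2)) := by
    rw [gaussianPDFReal_def, hv]
  rw [hfe]
  have h1 : Tendsto (fun y : ℝ => -(y - m) ^ 2 / (2 * s ^ 2)) atTop atBot := by
    apply Tendsto.atBot_div_const (by positivity)
    apply tendsto_neg_atTop_atBot.comp
    exact (tendsto_pow_atTop two_ne_zero).comp (tendsto_atTop_add_const_right _ _ tendsto_id)
  have := (Real.tendsto_exp_atBot.comp h1).const_mul ((Real.sqrt (2 * π * s ^ 2))⁻¹)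
  simpa using this

/-- For the Gaussian measure with mean `m` and variance `s²` (`s > 0`),
`∫ max(x,0) dμ = (s/√(2π))·exp(−m²/(2s²)) + m·Φ(m/s)`. -/
theorem gaussian_integral_max_pos (m s : ℝ) (hs : 0 < s) :
    ∫ x, max x 0 ∂(gaussianReal m (Real.toNNReal (s ^ 2))) =
      s / Real.sqrt (2 * Real.pi) * Real.exp (-m ^ 2 / (2 * s ^ 2)) +
        m * stdNormalCDF (m / s) := by
  set v := Real.toNNReal (s ^ 2) with hvdef
  have hv : ((v : ℝ≥0) : ℝ) = s ^ 2 := Real.coe_toNNReal _ (sq_nonneg s)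
  have hvne : v ≠ 0 := by
    rw [hvdef, ne_eq, Real.toNNReal_eq_zero]
    push_neg
    positivity
  have hmeas : Measurable fun x => (gaussianPDFReal m v x).toNNReal :=
    (measurable_gaussianPDFReal m v).real_toNNReal
  have hpdf : gaussianPDF m v = fun x => ((gaussianPDFReal m v x).toNNReal : ℝ≥0∞) := rfl
  rw [gaussianReal_of_var_ne_zero _ hvne, hpdf,
    integral_withDensity_eq_integral_smul hmeas]
  have heq : (fun x => ((gaussianPDFReal m v x).toNNReal : ℝ≥0) • max x 0) =
      Set.indicator (Ioi (0:ℝ)) (fun x => x * gaussianPDFReal m v x) := by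
    funext x
    rcases le_or_gt x 0 with h | h
    · rw [max_eq_right h, smul_zero, Set.indicator_of_notMem (by simpa using h.not_gt)]
    · rw [max_eq_left h.le, Set.indicator_of_mem (Set.mem_Ioi.mpr h), NNReal.smul_def, smul_eq_mul,
        Real.coe_toNNReal _ (gaussianPDFReal_nonneg m v x), mul_comm]
  rw [heq, integral_indicator measurableSet_Ioi]
  -- FTC step
  set G : ℝ → ℝ := fun x => m * stdNormalCDF ((x - m) / s) - s ^ 2 * gaussianPDFReal m v x
    with hG
  have hs2 : (s:ℝ) ^ 2 ≠ 0 := by positivity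
  have hderiv : ∀ x ∈ Ici (0:ℝ), HasDerivAt G (x * gaussianPDFReal m v x) x := by
    intro x _
    have hi : HasDerivAt (fun x : ℝ => (x - m) / s) (1 / s) x := by
      simpa using ((hasDerivAt_id x).sub_const m).div_const s
    have h1 : HasDerivAt (fun x => stdNormalCDF ((x - m) / s))
        (gaussianPDFReal 0 1 ((x - m) / s) * (1 / s)) x :=
      HasDerivAt.comp (h₂ := stdNormalCDF) x (stdNormalCDF_hasDerivAt ((x - m) / s)) hi
    have h2 := gauss_hasDerivAt m s hs x
    have h3 := (h1.const_mul m).sub (h2.const_mul (s ^ 2))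
    rw [hG]
    refine h3.congr_deriv ?_
    have hstd : gaussianPDFReal 0 1 ((x - m) / s) = s * gaussianPDFReal m v x := by
      rw [hvdef] at hv ⊢
      rw [gauss_eq_std m s hs x]
      field_simp
    rw [hstd]
    field_simp
    ring
  have hnonneg : ∀ x ∈ Ioi (0:ℝ), 0 ≤ x * gaussianPDFReal m v x := fun x hx =>
    mul_nonneg (le_of_lt hx) (gaussianPDFReal_nonneg m v x)
  have htend : Tendsto G atTop (nhds (m * 1 - s ^ 2 * 0)) := by
    have t1 : Tendsto (fun x : ℝ => (x - m) / s) atTop atTop :=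
      (tendsto_atTop_add_const_right _ (-m) tendsto_id).atTop_div_const hs
    have t2 := stdNormalCDF_tendsto.comp t1
    have t3 : Tendsto (gaussianPDFReal m v) atTop (nhds 0) := by
      rw [hvdef]; exact gauss_tendsto_zero m s hs
    exact (t2.const_mul m).sub (t3.const_mul (s ^ 2))
  rw [MeasureTheory.integral_Ioi_of_hasDerivAt_of_nonneg' hderiv hnonneg htend]
  -- final computation
  have hG0 : G 0 = m * (1 - stdNormalCDF (m / s)) -
      s ^ 2 * ((Real.sqrt (2 * π) * s)⁻¹ * Real.exp (-m ^ 2 / (2 * s ^ 2))) := by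
    rw [hG]
    show m * stdNormalCDF ((0 - m) / s) - s ^ 2 * gaussianPDFReal m v 0 = _
    have h1 : ((0:ℝ) - m) / s = -(m / s) := by ring
    have h2 : gaussianPDFReal m v 0 =
        (Real.sqrt (2 * π) * s)⁻¹ * Real.exp (-m ^ 2 / (2 * s ^ 2)) := by
      simp only [gaussianPDFReal, hv]
      rw [Real.sqrt_mul (by positivity) (s ^ 2), Real.sqrt_sq hs.le]
      congr 1
      ring_nf
    rw [h1, stdNormalCDF_neg, h2]
  rw [hG0]
  have hss : (0:ℝ) < Real.sqrt (2 * π) := Real.sqrt_pos.mpr (by positivity)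
  field_simp
  ring
end

section
/- Let c_o, c_u ≥ 0 and C(x) = c_o·max(x, 0) + c_u·max(−x, 0). Let m ∈ ℝ, s > 0, and let μ be the Gaussian measure on ℝ with mean m and variance s². Then ∫ C(x) dμ(x) = (c_o + c_u)·(s/√(2π))·exp(−m²/(2s²)) + m·(c_o − c_u) + m·[ c_u·Φ(m/s) − c_o·Φ(−m/s) ], where Φ denotes the standard normal cumulative distribution function. (This quantity is denoted J(m, s).) -/
open MeasureTheory ProbabilityTheory
open Real Set
open scoped ENNReal NNReal

noncomputable def E : ℝ → ℝ := fun x => Real.exp (-x ^ 2 / 2)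

lemma E_pos (x : ℝ) : 0 < E x := Real.exp_pos _
lemma E_even (x : ℝ) : E (-x) = E x := by simp [E]

lemma integrable_E : Integrable E := by
  have := integrable_exp_neg_mul_sq (by norm_num : (0:ℝ) < 1/2)
  refine this.congr (ae_of_all _ fun x => ?_)
  simp only [E]; ring_nf

lemma integrable_xE : Integrable (fun x => x * E x) := by
  have := integrable_mul_exp_neg_mul_sq (by norm_num : (0:ℝ) < 1/2)
  refine this.congr (ae_of_all _ fun x => ?_)
  simp only [E]; ring_nf

lemma integral_E : ∫ x, E x = Real.sqrt (2 * Real.pi) := by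
  have := integral_gaussian (1/2)
  rw [show Real.pi / (1/2) = 2 * Real.pi by ring] at this
  rw [← this]
  congr 1 with x
  simp only [E]; ring_nf

lemma hasDerivAt_negE (x : ℝ) : HasDerivAt (fun y => -E y) (x * E x) x := by
  have h : HasDerivAt (fun y : ℝ => -y ^ 2 / 2) (-x) x := by
    have := ((hasDerivAt_pow 2 x).neg).div_const 2
    simpa using this.congr_deriv (by push_cast; ring)
  have := (h.exp).neg
  exact this.congr_deriv (by simp only [E]; ring)

lemma tendsto_E_atTop : Filter.Tendsto (fun x => -E x) Filter.atTop (nhds 0) := by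
  have h0 : Filter.Tendsto E Filter.atTop (nhds 0) := by
    unfold E
    apply Real.tendsto_exp_atBot.comp
    apply Filter.Tendsto.atBot_div_const (by norm_num)
    apply Filter.tendsto_neg_atBot_iff.mpr
    exact Filter.tendsto_pow_atTop (by norm_num)
  simpa using h0.neg

lemma tendsto_E_atBot : Filter.Tendsto (fun x => -E x) Filter.atBot (nhds 0) := by
  have := tendsto_E_atTop.comp Filter.tendsto_neg_atBot_atTop
  refine this.congr fun x => ?_
  simp [Function.comp, E_even]

lemma integral_xE_Ioi (a : ℝ) : ∫ x in Ioi a, x * E x = E a := by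
  have := integral_Ioi_of_hasDerivAt_of_tendsto' (a := a) (f := fun y => -E y)
    (f' := fun x => x * E x) (fun x _ => hasDerivAt_negE x)
    (integrable_xE.integrableOn) tendsto_E_atTop
  simpa using this

lemma integral_xE_Iic (a : ℝ) : ∫ x in Iic a, x * E x = -E a := by
  have := integral_Iic_of_hasDerivAt_of_tendsto' (a := a) (f := fun y => -E y)
    (f' := fun x => x * E x) (fun x _ => hasDerivAt_negE x)
    (integrable_xE.integrableOn) tendsto_E_atBot
  simpa using this

lemma integral_E_split (a : ℝ) :
    (∫ x in Iic a, E x) + ∫ x in Ioi a, E x = Real.sqrt (2 * Real.pi) := by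
  rw [intervalIntegral.integral_Iic_add_Ioi integrable_E.integrableOn integrable_E.integrableOn, integral_E]

lemma integral_E_Ioi_neg (a : ℝ) : ∫ x in Ioi a, E x = ∫ x in Iic (-a), E x := by
  calc ∫ x in Ioi a, E x = ∫ x in Ioi a, E (-x) := by simp [E_even]
    _ = ∫ x in Iic (-a), E x := integral_comp_neg_Ioi a E

lemma stdNormalCDF_eq_s7 (z : ℝ) :
    stdNormalCDF z = (1 / Real.sqrt (2 * Real.pi)) * ∫ u in Iic z, E u := by
  rw [stdNormalCDF, ← integral_const_mul]
  rfl

lemma continuous_E : Continuous E := by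
  unfold E; fun_prop

lemma integrable_absxE : Integrable (fun x => |x| * E x) := by
  refine integrable_xE.abs.congr (ae_of_all _ fun x => ?_)
  show |x * E x| = |x| * E x
  rw [abs_mul, abs_of_pos (E_pos x)]

lemma integrable_maxE (b c : ℝ) : Integrable (fun x => max (b * x + c) 0 * E x) := by
  refine Integrable.mono' ((integrable_absxE.const_mul |b|).add (integrable_E.const_mul |c|))
    ?_ (ae_of_all _ fun x => ?_)
  · exact (((continuous_const.mul continuous_id).add continuous_const).max
      continuous_const).mul continuous_E |>.aestronglyMeasurable
  · have h1 : max (b * x + c) 0 ≤ |b| * |x| + |c| := by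
      refine max_le (le_trans (le_abs_self _) ?_) (by positivity)
      calc |b * x + c| ≤ |b * x| + |c| := abs_add_le _ _
        _ = |b| * |x| + |c| := by rw [abs_mul]
    have h2 : ‖max (b * x + c) 0 * E x‖ = max (b * x + c) 0 * E x := by
      rw [Real.norm_eq_abs, abs_mul, abs_of_nonneg (le_max_right _ _),
        abs_of_pos (E_pos x)]
    rw [h2]
    calc max (b * x + c) 0 * E x ≤ (|b| * |x| + |c|) * E x :=
          mul_le_mul_of_nonneg_right h1 (E_pos x).le
      _ = |b| * (|x| * E x) + |c| * E x := by ring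

lemma key_integral (c_o c_u m s : ℝ) (hs : 0 < s) :
    ∫ x, gaussianPDFReal 0 1 x *
        (c_o * max (s * x + m) 0 + c_u * max (-(s * x + m)) 0) =
      (c_o + c_u) * (s / Real.sqrt (2 * Real.pi)) * Real.exp (-m ^ 2 / (2 * s ^ 2)) +
        m * (c_o - c_u) +
        m * (c_u * stdNormalCDF (m / s) - c_o * stdNormalCDF (-(m / s))) := by
  have hpdf : ∀ x, gaussianPDFReal 0 1 x = (Real.sqrt (2 * Real.pi))⁻¹ * E x := by
    intro x
    simp [gaussianPDFReal, E]
  set a : ℝ := -(m / s) with ha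
  set P : ℝ := ∫ x in Iic a, E x with hP
  set Q : ℝ := ∫ x in Ioi a, E x with hQ
  have hs' : s ≠ 0 := ne_of_gt hs
  have hsa : s * a = -m := by rw [ha]; field_simp
  have hge : ∀ x ∈ Ioi a, 0 ≤ s * x + m := by
    intro x hx
    have h1 : s * a ≤ s * x := mul_le_mul_of_nonneg_left (le_of_lt hx) hs.le
    linarith [hsa ▸ h1]
  have hle : ∀ x ∈ Iic a, s * x + m ≤ 0 := by
    intro x hx
    have h1 : s * x ≤ s * a := mul_le_mul_of_nonneg_left hx hs.le
    linarith [hsa ▸ h1]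
  -- value of A
  have hA : ∫ x, max (s * x + m) 0 * E x = s * E a + m * Q := by
    rw [← intervalIntegral.integral_Iic_add_Ioi ((integrable_maxE s m).integrableOn)
      ((integrable_maxE s m).integrableOn)]
    have h1 : ∫ x in Iic a, max (s * x + m) 0 * E x = 0 := by
      rw [setIntegral_congr_fun measurableSet_Iic (g := fun _ => (0:ℝ)) ?_, integral_zero]
      intro x hx
      show max (s * x + m) 0 * E x = 0
      rw [max_eq_right (hle x hx), zero_mul]
    have h2 : ∫ x in Ioi a, max (s * x + m) 0 * E x = s * E a + m * Q := by
      rw [setIntegral_congr_fun measurableSet_Ioi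
          (g := fun x => s * (x * E x) + m * E x) ?_,
        integral_add ((integrable_xE.integrableOn).const_mul s)
          ((integrable_E.integrableOn).const_mul m),
        integral_const_mul, integral_const_mul, integral_xE_Ioi, ← hQ]
      intro x hx
      show max (s * x + m) 0 * E x = s * (x * E x) + m * E x
      rw [max_eq_left (hge x hx)]; ring
    rw [h1, h2, zero_add]
  -- value of B
  have hB : ∫ x, max (-(s * x + m)) 0 * E x = s * E a - m * P := by
    have hintB : Integrable (fun x => max (-(s * x + m)) 0 * E x) :=
      (integrable_maxE (-s) (-m)).congr (ae_of_all _ fun x => by ring_nf)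
    rw [← intervalIntegral.integral_Iic_add_Ioi hintB.integrableOn hintB.integrableOn]
    have h1 : ∫ x in Iic a, max (-(s * x + m)) 0 * E x
        = -(s * (-(E a)) + m * P) := by
      rw [setIntegral_congr_fun measurableSet_Iic
          (g := fun x => -(s * (x * E x) + m * E x)) ?_, integral_neg,
        integral_add ((integrable_xE.integrableOn).const_mul s)
          ((integrable_E.integrableOn).const_mul m),
        integral_const_mul, integral_const_mul, integral_xE_Iic, ← hP]
      intro x hx
      show max (-(s * x + m)) 0 * E x = -(s * (x * E x) + m * E x)
      rw [max_eq_left (by linarith [hle x hx])]; ring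
    have h2 : ∫ x in Ioi a, max (-(s * x + m)) 0 * E x = 0 := by
      rw [setIntegral_congr_fun measurableSet_Ioi (g := fun _ => (0:ℝ)) ?_, integral_zero]
      intro x hx
      show max (-(s * x + m)) 0 * E x = 0
      rw [max_eq_right (by linarith [hge x hx]), zero_mul]
    rw [h1, h2, add_zero]; ring
  -- split the main integral
  have hsplit : ∫ x, gaussianPDFReal 0 1 x *
      (c_o * max (s * x + m) 0 + c_u * max (-(s * x + m)) 0)
      = (Real.sqrt (2 * Real.pi))⁻¹ *
        (c_o * (s * E a + m * Q) + c_u * (s * E a - m * P)) := by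
    have heq : (fun x => gaussianPDFReal 0 1 x *
        (c_o * max (s * x + m) 0 + c_u * max (-(s * x + m)) 0))
        = fun x => (Real.sqrt (2 * Real.pi))⁻¹ *
          (c_o * (max (s * x + m) 0 * E x) + c_u * (max (-(s * x + m)) 0 * E x)) := by
      funext x; rw [hpdf x]; ring
    rw [heq, integral_const_mul, integral_add
      ((integrable_maxE s m).const_mul c_o)
      (((integrable_maxE (-s) (-m)).congr (ae_of_all _ fun x => by ring_nf)).const_mul c_u),
      integral_const_mul, integral_const_mul, hA, hB]
  rw [hsplit]
  -- CDF values
  have hCDF1 : stdNormalCDF (m / s) = (1 / Real.sqrt (2 * Real.pi)) * Q := by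
    rw [stdNormalCDF_eq_s7, hQ, integral_E_Ioi_neg, ha, neg_neg]
  have hCDF2 : stdNormalCDF (-(m / s)) = (1 / Real.sqrt (2 * Real.pi)) * P := by
    rw [stdNormalCDF_eq_s7, hP]
  have hEa : E a = Real.exp (-m ^ 2 / (2 * s ^ 2)) := by
    unfold E
    rw [show -a ^ 2 / 2 = -m ^ 2 / (2 * s ^ 2) by
      rw [ha, neg_sq, div_pow, neg_div, div_div, neg_div, mul_comm (s^2) 2]]
  have hPQ : P + Q = Real.sqrt (2 * Real.pi) := integral_E_split a
  have hR : (0:ℝ) < Real.sqrt (2 * Real.pi) := Real.sqrt_pos.mpr (by positivity)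
  rw [hCDF1, hCDF2, ← hEa]
  have hQ' : Q = Real.sqrt (2 * Real.pi) - P := by linarith
  rw [hQ']
  field_simp
  ring

lemma gaussian_map_eq (m s : ℝ) (hs : 0 < s) :
    gaussianReal m (Real.toNNReal (s ^ 2)) =
      (gaussianReal 0 1).map (fun x => s * x + m) := by
  have h1 : (fun x : ℝ => s * x + m) = (· + m) ∘ (s * ·) := rfl
  rw [h1, ← Measure.map_map (measurable_add_const m) (measurable_const_mul s),
    gaussianReal_map_const_mul s, gaussianReal_map_add_const m]
  congr 1
  · ring
  · ext
    simp [Real.coe_toNNReal _ (sq_nonneg s)]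

/-- The expected newsvendor cost under a Gaussian measure with mean `m`
and variance `s²` equals
`J(m,s) = (c_o+c_u)·(s/√(2π))·exp(−m²/(2s²)) + m·(c_o−c_u) + m·[c_u·Φ(m/s) − c_o·Φ(−m/s)]`. -/
theorem gaussian_expected_newsvendor_cost (c_o c_u : ℝ) (hco : 0 ≤ c_o) (hcu : 0 ≤ c_u)
    (C : ℝ → ℝ) (hC : ∀ x : ℝ, C x = c_o * max x 0 + c_u * max (-x) 0)
    (m s : ℝ) (hs : 0 < s) :
    ∫ x, C x ∂(gaussianReal m (Real.toNNReal (s ^ 2))) =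
      (c_o + c_u) * (s / Real.sqrt (2 * Real.pi)) * Real.exp (-m ^ 2 / (2 * s ^ 2)) +
        m * (c_o - c_u) +
        m * (c_u * stdNormalCDF (m / s) - c_o * stdNormalCDF (-(m / s))) := by
  have hCeq : C = fun x => c_o * max x 0 + c_u * max (-x) 0 := funext hC
  subst hCeq
  have hCont : Continuous (fun x : ℝ => c_o * max x 0 + c_u * max (-x) 0) := by
    fun_prop
  rw [gaussian_map_eq m s hs,
    integral_map (by fun_prop : Measurable fun x : ℝ => s * x + m).aemeasurable
      hCont.aestronglyMeasurable,
    gaussianReal_of_var_ne_zero 0 one_ne_zero,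
    show gaussianPDF 0 1 = fun x => ((((gaussianPDFReal 0 1 x).toNNReal) : ℝ≥0) : ℝ≥0∞)
      from rfl,
    integral_withDensity_eq_integral_smul
      ((measurable_gaussianPDFReal 0 1).real_toNNReal)]
  rw [show (fun x => (gaussianPDFReal 0 1 x).toNNReal •
        (c_o * max (s * x + m) 0 + c_u * max (-(s * x + m)) 0))
      = fun x => gaussianPDFReal 0 1 x *
        (c_o * max (s * x + m) 0 + c_u * max (-(s * x + m)) 0) from
    funext fun x => by
      rw [NNReal.smul_def, Real.coe_toNNReal _ (gaussianPDFReal_nonneg 0 1 x), smul_eq_mul]]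
  exact key_integral c_o c_u m s hs
end

section
/- Let c_o, c_u ≥ 0 with c_o + c_u > 0, and fix m ∈ ℝ. Then the function s ↦ J(m, s) := (c_o + c_u)·(s/√(2π))·exp(−m²/(2s²)) + m·(c_o − c_u) + m·[c_u·Φ(m/s) − c_o·Φ(−m/s)] is strictly increasing on (0, ∞), where Φ is the standard normal cumulative distribution function. -/
/-- `J(m,s)`: the expected newsvendor cost when order-minus-demand is `N(m, s²)`. -/
noncomputable def J (c_o c_u m s : ℝ) : ℝ :=
  (c_o + c_u) * (s / Real.sqrt (2 * Real.pi)) * Real.exp (-m ^ 2 / (2 * s ^ 2)) +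
    m * (c_o - c_u) +
    m * (c_u * stdNormalCDF (m / s) - c_o * stdNormalCDF (-(m / s)))

noncomputable def gpdf (u : ℝ) : ℝ := (1 / Real.sqrt (2 * Real.pi)) * Real.exp (-u ^ 2 / 2)

lemma gpdf_integrable : MeasureTheory.Integrable gpdf := by
  have h := (integrable_exp_neg_mul_sq (by norm_num : (0:ℝ) < 1/2)).const_mul
      (1 / Real.sqrt (2 * Real.pi))
  refine h.congr ?_
  filter_upwards with x
  unfold gpdf
  ring_nf

lemma gpdf_continuous : Continuous gpdf := by
  unfold gpdf
  fun_prop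

lemma hasDerivAt_cdf (z : ℝ) : HasDerivAt stdNormalCDF (gpdf z) z := by
  have heq : stdNormalCDF = fun z => stdNormalCDF 0 + ∫ u in (0:ℝ)..z, gpdf u := by
    funext z
    have := intervalIntegral.integral_Iic_sub_Iic
      (gpdf_integrable.integrableOn (s := Set.Iic 0))
      (gpdf_integrable.integrableOn (s := Set.Iic z))
    unfold stdNormalCDF gpdf at *
    linarith [this]
  rw [heq]
  have h := intervalIntegral.integral_hasDerivAt_right
    (gpdf_integrable.intervalIntegrable (a := 0) (b := z))
    (gpdf_continuous.aestronglyMeasurable.stronglyMeasurableAtFilter)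
    gpdf_continuous.continuousAt
  simpa using h

lemma hasDerivAt_J (c_o c_u m : ℝ) {s : ℝ} (hs : 0 < s) :
    HasDerivAt (fun s => J c_o c_u m s)
      ((c_o + c_u) * (1 / Real.sqrt (2 * Real.pi)) * Real.exp (-m ^ 2 / (2 * s ^ 2))) s := by
  have hs0 : s ≠ 0 := ne_of_gt hs
  -- derivative of m / s
  have hds : HasDerivAt (fun s : ℝ => m / s) (-(m / s ^ 2)) s := by
    simpa [div_eq_mul_inv, neg_div, mul_comm, mul_assoc] using
      ((hasDerivAt_inv hs0).const_mul m)
  -- derivative of the first Φ-composition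
  have hΦ1 : HasDerivAt (fun s : ℝ => stdNormalCDF (m / s))
      (gpdf (m / s) * -(m / s ^ 2)) s := (hasDerivAt_cdf (m / s)).comp s hds
  have hΦ2 : HasDerivAt (fun s : ℝ => stdNormalCDF (-(m / s)))
      (gpdf (-(m / s)) * (m / s ^ 2)) s := by
    have := (hasDerivAt_cdf (-(m / s))).comp s hds.neg
    rw [neg_neg] at this
    exact this
  -- derivative of the exponent
  have hinner : HasDerivAt (fun s : ℝ => -m ^ 2 / (2 * s ^ 2)) (m ^ 2 / s ^ 3) s := by
    have hsq : HasDerivAt (fun x : ℝ => x ^ 2) (2 * s) s := by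
      simpa using hasDerivAt_pow 2 s
    have h2 : HasDerivAt (fun x : ℝ => (x ^ 2)⁻¹) (-(2 * s) / (s ^ 2) ^ 2) s :=
      hsq.inv (pow_ne_zero 2 hs0)
    have h3 := h2.const_mul (-m ^ 2 / 2)
    have hfe : (fun s : ℝ => -m ^ 2 / (2 * s ^ 2)) = fun y : ℝ => -m ^ 2 / 2 * (y ^ 2)⁻¹ := by
      funext x; ring_nf
    rw [hfe]
    refine h3.congr_deriv ?_
    field_simp
  have hexp : HasDerivAt (fun s : ℝ => Real.exp (-m ^ 2 / (2 * s ^ 2)))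
      (Real.exp (-m ^ 2 / (2 * s ^ 2)) * (m ^ 2 / s ^ 3)) s := hinner.exp
  -- derivative of the linear factor
  have hlin : HasDerivAt (fun s : ℝ => (c_o + c_u) * (s / Real.sqrt (2 * Real.pi)))
      ((c_o + c_u) / Real.sqrt (2 * Real.pi)) s := by
    have hfe : (fun s : ℝ => (c_o + c_u) * (s / Real.sqrt (2 * Real.pi))) =
        fun y : ℝ => (c_o + c_u) / Real.sqrt (2 * Real.pi) * y := by
      funext x; ring_nf
    rw [hfe]
    simpa using (hasDerivAt_id s).const_mul ((c_o + c_u) / Real.sqrt (2 * Real.pi))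
  have hterm1 := hlin.mul hexp
  have hterm3 := ((hΦ1.const_mul c_u).sub (hΦ2.const_mul c_o)).const_mul m
  have htotal := (hterm1.add (hasDerivAt_const s (m * (c_o - c_u)))).add hterm3
  have hgE1 : gpdf (m / s) = (1 / Real.sqrt (2 * Real.pi)) * Real.exp (-m ^ 2 / (2 * s ^ 2)) := by
    unfold gpdf
    congr 1
    rw [div_pow]
    ring
  have hgE2 : gpdf (-(m / s)) = (1 / Real.sqrt (2 * Real.pi)) * Real.exp (-m ^ 2 / (2 * s ^ 2)) := by
    rw [← hgE1]; unfold gpdf; ring_nf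
  refine htotal.congr_deriv ?_
  rw [hgE1, hgE2]
  have hsqrt : Real.sqrt (2 * Real.pi) ≠ 0 := by positivity
  field_simp
  ring

/-- For fixed mean `m`, the expected cost `J(m, s)` is strictly
increasing in the standard deviation `s` on `(0, ∞)`. -/
theorem J_strictMonoOn_in_s (c_o c_u : ℝ) (hco : 0 ≤ c_o) (hcu : 0 ≤ c_u)
    (hsum : 0 < c_o + c_u) (m : ℝ) :
    StrictMonoOn (fun s : ℝ => J c_o c_u m s) (Set.Ioi (0 : ℝ)) := by

  apply strictMonoOn_of_deriv_pos (convex_Ioi 0)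
  · exact fun x hx => (hasDerivAt_J c_o c_u m hx).continuousAt.continuousWithinAt
  · rw [interior_Ioi]
    intro x hx
    rw [(hasDerivAt_J c_o c_u m hx).deriv]
    have hsqrt : 0 < Real.sqrt (2 * Real.pi) := by positivity
    positivity
end
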